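/- Let G be a group and σ : G → G an involutive anti-automorphism. Let δ > 0 and f, g : G → ℂ satisfy |f(x*y) + f(x*σ(y)) − 2·f(x)·g(y)| ≤ δ for all x, y ∈ G. If f is unbounded, then g satisfies g(x*y) + g(y*x) + g(σ(y)*x) + g(x*σ(y)) = 4·g(x)·g(y) for all x, y ∈ G. -/

import Mathlib

/-!
Write `Df(x, y) = f(xy) + f(xσ(y)) - 2f(x)g(y)` for the defect of the Wilson equation. Expanding
`f(z·u·v)` in two ways with the anti-automorphism `σ` gives an identity expressing
`2f(z)·(g(xy) + g(yx) + g(σ(y)x) + g(xσ(y)) - 4g(x)g(y))` as a combination of ten values of `Df`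
with coefficients depending only on `g(x)` and `g(y)`. So this product is bounded in `z`, and since
`f` is unbounded the second factor vanishes.
-/

section Defects

variable {G R : Type*} [Group G]

def wilsonDefect [Ring R] (σ : G → G) (f g : G → R) (x y : G) : R :=
  f (x * y) + f (x * σ y) - 2 * f x * g y

def dAlembertDefect [Ring R] (σ : G → G) (g : G → R) (x y : G) : R :=
  g (x * y) + g (y * x) + g (σ y * x) + g (x * σ y) - 4 * g x * g y

theorem mul_two_mul_dAlembertDefect [CommRing R] {σ : G → G}
    (hanti : ∀ x y : G, σ (x * y) = σ y * σ x) (hinv : ∀ x : G, σ (σ x) = x)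
    (f g : G → R) (x y z : G) :
    f z * (2 * dAlembertDefect σ g x y) =
      (wilsonDefect σ f g (z * x) y + wilsonDefect σ f g (z * σ x) y
          + wilsonDefect σ f g (z * y) x + wilsonDefect σ f g (z * σ y) x)
        - (wilsonDefect σ f g z (x * y) + wilsonDefect σ f g z (y * x)
          + wilsonDefect σ f g z (σ y * x) + wilsonDefect σ f g z (x * σ y))
        + 2 * g y * wilsonDefect σ f g z x + 2 * g x * wilsonDefect σ f g z y := by
  simp only [wilsonDefect, dAlembertDefect, hanti, hinv, mul_assoc]
  ring

theorem norm_mul_two_mul_dAlembertDefect_le [SeminormedCommRing R] {σ : G → G}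
    (hanti : ∀ x y : G, σ (x * y) = σ y * σ x) (hinv : ∀ x : G, σ (σ x) = x)
    {f g : G → R} {δ : ℝ} (h : ∀ x y : G, ‖wilsonDefect σ f g x y‖ ≤ δ) (x y z : G) :
    ‖f z * (2 * dAlembertDefect σ g x y)‖ ≤ 8 * δ + ‖2 * g y‖ * δ + ‖2 * g x‖ * δ := by
  rw [mul_two_mul_dAlembertDefect hanti hinv]
  have norm_sum4_le : ∀ a b c d : R, ‖a + b + c + d‖ ≤ ‖a‖ + ‖b‖ + ‖c‖ + ‖d‖ := fun a b c d =>
    (norm_add₄_le).trans_eq (by ring)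
  have hδ : 0 ≤ δ := (norm_nonneg _).trans (h x y)
  have hscaled : ∀ (c : R) (a b : G), ‖c * wilsonDefect σ f g a b‖ ≤ ‖c‖ * δ := fun c a b =>
    (norm_mul_le _ _).trans (mul_le_mul_of_nonneg_left (h a b) (norm_nonneg c))
  refine (norm_add₃_le).trans ?_
  gcongr ?_ + ?_ + ?_
  · refine (norm_sub_le _ _).trans ?_
    refine le_trans (add_le_add (norm_sum4_le _ _ _ _) (norm_sum4_le _ _ _ _)) ?_
    linarith [h (z * x) y, h (z * σ x) y, h (z * y) x, h (z * σ y) x,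
      h z (x * y), h z (y * x), h z (σ y * x), h z (x * σ y)]
  · exact hscaled _ _ _
  · exact hscaled _ _ _

end Defects

theorem eq_zero_of_forall_norm_mul_le {α K : Type*} [NormedDivisionRing K] {f : α → K}
    (hf : ∀ M : ℝ, ∃ z : α, M < ‖f z‖) {c : K} {C : ℝ} (hC : ∀ z, ‖f z * c‖ ≤ C) : c = 0 := by
  by_contra hc
  have hc' : 0 < ‖c‖ := norm_pos_iff.mpr hc
  obtain ⟨z, hz⟩ := hf (C / ‖c‖)
  have := hC z
  rw [norm_mul] at this
  rw [div_lt_iff₀ hc'] at hz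
  linarith

theorem stmt_4_general (G : Type*) [Group G] (σ : G → G)
    (hanti : ∀ x y : G, σ (x * y) = σ y * σ x) (hinv : ∀ x : G, σ (σ x) = x)
    (δ : ℝ) (f g : G → ℂ)
    (h : ∀ x y : G, ‖f (x * y) + f (x * σ y) - 2 * f x * g y‖ ≤ δ)
    (hf : ∀ M : ℝ, ∃ z : G, M < ‖f z‖) :
    ∀ x y : G, g (x * y) + g (y * x) + g (σ y * x) + g (x * σ y) = 4 * g x * g y := by
  intro x y
  have hzero : 2 * dAlembertDefect σ g x y = 0 :=
    eq_zero_of_forall_norm_mul_le hf (norm_mul_two_mul_dAlembertDefect_le hanti hinv h x y)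
  have hdefect : dAlembertDefect σ g x y = 0 := (mul_eq_zero.mp hzero).resolve_left two_ne_zero
  rw [dAlembertDefect, sub_eq_zero] at hdefect
  exact hdefect

theorem stmt_4 (G : Type*) [Group G] (σ : G → G)
    (hanti : ∀ x y : G, σ (x * y) = σ y * σ x) (hinv : ∀ x : G, σ (σ x) = x)
    (δ : ℝ) (hδ : 0 < δ) (f g : G → ℂ)
    (h : ∀ x y : G, ‖f (x * y) + f (x * σ y) - 2 * f x * g y‖ ≤ δ)
    (hf : ∀ M : ℝ, ∃ z : G, M < ‖f z‖) :
    ∀ x y : G, g (x * y) + g (y * x) + g (σ y * x) + g (x * σ y) = 4 * g x * g y :=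
  stmt_4_general G σ hanti hinv δ f g h hf
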